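/- Let 0 < ω < 2 and let α > 0 be such that γ = ((1+α)/α)·(ω/2) < 1. Then for every f ∈ PW_ω(ℤ), ((1−γ)/(1+α))·∑_{n∈ℤ} |f(n)|² ≤ ∑_{j even} (1/2)·|f(j) + f(j+1)|² ≤ ∑_{n∈ℤ} |f(n)|², where the middle sum runs over all even integers j. -/

import Mathlib

/-!
Pair the coordinates as `{2j, 2j+1}`. By the parallelogram law, `∑ₙ |f(n)|²` is the sum of
`∑_j ½|f(2j) + f(2j+1)|²` and `∑_j ½|f(2j) - f(2j+1)|²`, and the second sum is at most
`½ ∑ₙ |f(n) - f(n+1)|²`. The differences `f(n) - f(n+1)` are the Fourier coefficients of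
`(1 - e^{-iξ}) F(ξ)`, and `|1 - e^{-iξ}|² = 4 sin²(ξ/2) ≤ ω` on the support of `F`, so by Parseval
`∑ₙ |f(n) - f(n+1)|² ≤ ω ∑ₙ |f(n)|²`. Hence the middle sum is at least `(1 - ω/2) ∑ₙ |f(n)|²`,
and `(1 - γ)/(1 + α) ≤ 1 - ω/2`.
-/

open MeasureTheory Real Set

/-- `f : ℤ → ℂ` belongs to the Paley–Wiener space `PW_ω(ℤ)`: it is square-summable
and the `L²` function `F` on `[−π, π)` whose Fourier coefficients are `f` (the image
of `f` under the Fourier–Plancherel unitary) vanishes a.e. on the set where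
`4·sin²(ξ/2) > ω`. -/
def IsPaleyWienerZ (ω : ℝ) (f : ℤ → ℂ) : Prop :=
  Summable (fun k : ℤ => ‖f k‖ ^ 2) ∧
  ∃ F : ℝ → ℂ,
    MemLp F 2 (volume.restrict (Ico (-π) π)) ∧
    (∀ᵐ ξ ∂(volume.restrict (Ico (-π) π)), ω < 4 * Real.sin (ξ / 2) ^ 2 → F ξ = 0) ∧
    ∀ k : ℤ, f k = ((1 / (2 * π) : ℝ) : ℂ) *
      ∫ ξ in Ico (-π) π, F ξ * Complex.exp (-(Complex.I * (k : ℂ) * (ξ : ℂ)))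

theorem HasSum.int_even_add_odd {M : Type*} [AddCommMonoid M] [TopologicalSpace M]
    [ContinuousAdd M] {f : ℤ → M} {m m' : M} (he : HasSum (fun k ↦ f (2 * k)) m)
    (ho : HasSum (fun k ↦ f (2 * k + 1)) m') : HasSum f (m + m') := by
  have := mul_right_injective₀ (two_ne_zero' ℤ)
  replace ho := ((add_left_injective 1).comp this).hasSum_range_iff.2 ho
  refine (this.hasSum_range_iff.2 he).add_isCompl ?_ ho
  simpa [Function.comp_def, ← even_iff_exists_two_mul, ← odd_iff_exists_bit1] using
    Int.isCompl_even_odd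

theorem tsum_int_even_add_odd {M : Type*} [AddCommGroup M] [UniformSpace M]
    [IsUniformAddGroup M] [CompleteSpace M] [T2Space M] {f : ℤ → M} (hf : Summable f) :
    ∑' k, f (2 * k) + ∑' k, f (2 * k + 1) = ∑' k, f k :=
  ((hf.comp_injective (mul_right_injective₀ (two_ne_zero' ℤ))).hasSum.int_even_add_odd
    (hf.comp_injective ((add_left_injective 1).comp
      (mul_right_injective₀ (two_ne_zero' ℤ)))).hasSum).tsum_eq.symm

section SquareSummable

variable {E : Type*} [NormedAddCommGroup E] {f : ℤ → E}

theorem Summable.sq_norm_sub_add_one (hf : Summable fun n ↦ ‖f n‖ ^ 2) :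
    Summable fun n ↦ ‖f n - f (n + 1)‖ ^ 2 := by
  refine .of_nonneg_of_le (fun _ ↦ by positivity) (fun n ↦ ?_)
    ((hf.add (hf.comp_injective (add_left_injective 1))).mul_left 2)
  calc ‖f n - f (n + 1)‖ ^ 2 ≤ (‖f n‖ + ‖f (n + 1)‖) ^ 2 := by gcongr; exact norm_sub_le _ _
    _ ≤ 2 * (‖f n‖ ^ 2 + ‖f (n + 1)‖ ^ 2) := add_sq_le

theorem tsum_half_sq_norm_sub_le (hf : Summable fun n ↦ ‖f n - f (n + 1)‖ ^ 2) :
    ∑' j, 1 / 2 * ‖f (2 * j) - f (2 * j + 1)‖ ^ 2 ≤ 1 / 2 * ∑' n, ‖f n - f (n + 1)‖ ^ 2 := by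
  rw [tsum_mul_left, ← tsum_int_even_add_odd hf]
  have : 0 ≤ ∑' j, ‖f (2 * j + 1) - f (2 * j + 1 + 1)‖ ^ 2 := tsum_nonneg fun _ ↦ by positivity
  linarith

theorem tsum_half_sq_norm_add_add_tsum_half_sq_norm_sub [InnerProductSpace ℝ E]
    (hf : Summable fun n ↦ ‖f n‖ ^ 2) :
    ∑' j, 1 / 2 * ‖f (2 * j) + f (2 * j + 1)‖ ^ 2 + ∑' j, 1 / 2 * ‖f (2 * j) - f (2 * j + 1)‖ ^ 2 =
      ∑' n, ‖f n‖ ^ 2 := by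
  have hpar (j : ℤ) : 1 / 2 * ‖f (2 * j) + f (2 * j + 1)‖ ^ 2 +
      1 / 2 * ‖f (2 * j) - f (2 * j + 1)‖ ^ 2 = ‖f (2 * j)‖ ^ 2 + ‖f (2 * j + 1)‖ ^ 2 := by
    linear_combination parallelogram_law_with_norm ℝ (f (2 * j)) (f (2 * j + 1)) / 2
  have he : Summable fun j ↦ ‖f (2 * j)‖ ^ 2 :=
    hf.comp_injective (mul_right_injective₀ (two_ne_zero' ℤ))
  have ho : Summable fun j ↦ ‖f (2 * j + 1)‖ ^ 2 :=
    hf.comp_injective ((add_left_injective 1).comp (mul_right_injective₀ (two_ne_zero' ℤ)))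
  have hadd : Summable fun j ↦ 1 / 2 * ‖f (2 * j) + f (2 * j + 1)‖ ^ 2 :=
    .of_nonneg_of_le (fun _ ↦ by positivity)
      (fun j ↦ by nlinarith [hpar j, sq_nonneg ‖f (2 * j) - f (2 * j + 1)‖]) (he.add ho)
  have hsub : Summable fun j ↦ 1 / 2 * ‖f (2 * j) - f (2 * j + 1)‖ ^ 2 :=
    .of_nonneg_of_le (fun _ ↦ by positivity)
      (fun j ↦ by nlinarith [hpar j, sq_nonneg ‖f (2 * j) + f (2 * j + 1)‖]) (he.add ho)
  rw [← hadd.tsum_add hsub, tsum_congr hpar, he.tsum_add ho]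
  exact tsum_int_even_add_odd hf

end SquareSummable

theorem fourierCoeffOn_neg_pi_pi (F : ℝ → ℂ) (k : ℤ) :
    fourierCoeffOn (neg_lt_self pi_pos) F k = ((1 / (2 * π) : ℝ) : ℂ) *
      ∫ ξ in Ico (-π) π, F ξ * Complex.exp (-(Complex.I * (k : ℂ) * (ξ : ℂ))) := by
  rw [fourierCoeffOn_eq_integral, intervalIntegral.integral_of_le (neg_le_self pi_pos.le),
    ← Measure.restrict_congr_set Ico_ae_eq_Ioc, sub_neg_eq_add, ← two_mul, Complex.real_smul]
  congr 1
  refine setIntegral_congr_fun measurableSet_Ico fun ξ _ ↦ ?_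
  rw [fourier_coe_apply, smul_eq_mul, mul_comm]
  congr 2
  push_cast
  field_simp

theorem fourierCoeffOn_one_sub_exp_mul {F : ℝ → ℂ} (hF : IntegrableOn F (Ico (-π) π)) (k : ℤ) :
    fourierCoeffOn (neg_lt_self pi_pos) (fun ξ ↦ (1 - Complex.exp (-(Complex.I * ξ))) * F ξ) k =
      fourierCoeffOn (neg_lt_self pi_pos) F k - fourierCoeffOn (neg_lt_self pi_pos) F (k + 1) := by
  have hint (n : ℤ) : IntegrableOn (fun ξ : ℝ ↦ F ξ * Complex.exp (-(Complex.I * n * ξ)))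
      (Ico (-π) π) := by
    refine hF.mul_bdd (c := 1) (by fun_prop) (ae_of_all _ fun ξ ↦ ?_)
    simp [Complex.norm_exp]
  simp only [fourierCoeffOn_neg_pi_pi, ← mul_sub, ← integral_sub (hint k) (hint (k + 1))]
  congr 1
  refine integral_congr_ae (ae_of_all _ fun ξ ↦ ?_)
  have hexp : Complex.exp (-(Complex.I * ((k + 1 : ℤ) : ℂ) * ξ)) =
      Complex.exp (-(Complex.I * ξ)) * Complex.exp (-(Complex.I * k * ξ)) := by
    rw [← Complex.exp_add]; push_cast; ring_nf
  simp only [hexp]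
  ring

theorem hasSum_sq_fourierCoeffOn_Ico {a b : ℝ} {f : ℝ → ℂ} (hab : a < b)
    (hL2 : MemLp f 2 (volume.restrict (Ico a b))) :
    HasSum (fun i ↦ ‖fourierCoeffOn hab f i‖ ^ 2) ((b - a)⁻¹ * ∫ x in Ico a b, ‖f x‖ ^ 2) := by
  rw [Measure.restrict_congr_set Ico_ae_eq_Ioc] at hL2 ⊢
  simpa [intervalIntegral.integral_of_le hab.le] using hasSum_sq_fourierCoeffOn hab hL2

theorem Complex.norm_one_sub_exp_neg_mul_I (ξ : ℝ) :
    ‖1 - Complex.exp (-(Complex.I * ξ))‖ = 2 * |Real.sin (ξ / 2)| := by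
  have := Complex.norm_exp_I_mul_ofReal_sub_one (-ξ)
  rw [norm_sub_rev, Complex.ofReal_neg, mul_neg, neg_div, Real.sin_neg] at this
  simpa using this

theorem IsPaleyWienerZ.tsum_sq_norm_sub_add_one_le {ω : ℝ} {f : ℤ → ℂ}
    (hf : IsPaleyWienerZ ω f) : ∑' n, ‖f n - f (n + 1)‖ ^ 2 ≤ ω * ∑' n, ‖f n‖ ^ 2 := by
  obtain ⟨-, F, hF, hF_supp, hf_coeff⟩ := hf
  set m : ℝ → ℂ := fun ξ ↦ 1 - Complex.exp (-(Complex.I * ξ))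
  have hf_eq (k : ℤ) : f k = fourierCoeffOn (neg_lt_self pi_pos) F k := by
    rw [hf_coeff, fourierCoeffOn_neg_pi_pi]
  have hG_coeff (k : ℤ) :
      fourierCoeffOn (neg_lt_self pi_pos) (fun ξ ↦ m ξ * F ξ) k = f k - f (k + 1) := by
    rw [fourierCoeffOn_one_sub_exp_mul (hF.integrable one_le_two), hf_eq, hf_eq]
  have hG : MemLp (fun ξ ↦ m ξ * F ξ) 2 (volume.restrict (Ico (-π) π)) := by
    refine hF.of_le_mul (c := 2) ((by fun_prop : Continuous m).aestronglyMeasurable.mul hF.1)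
      (ae_of_all _ fun ξ ↦ ?_)
    rw [norm_mul, Complex.norm_one_sub_exp_neg_mul_I]
    gcongr
    linarith [abs_sin_le_one (ξ / 2)]
  have hpointwise : ∀ᵐ ξ ∂(volume.restrict (Ico (-π) π)), ‖m ξ * F ξ‖ ^ 2 ≤ ω * ‖F ξ‖ ^ 2 := by
    filter_upwards [hF_supp] with ξ hξ
    rw [norm_mul, mul_pow, Complex.norm_one_sub_exp_neg_mul_I, mul_pow, sq_abs]
    rcases le_or_gt (4 * sin (ξ / 2) ^ 2) ω with h | h
    · nlinarith [sq_nonneg ‖F ξ‖]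
    · simp [hξ h]
  have hF_sum := hasSum_sq_fourierCoeffOn_Ico (neg_lt_self pi_pos) hF
  have hG_sum := hasSum_sq_fourierCoeffOn_Ico (neg_lt_self pi_pos) hG
  simp only [← hf_eq] at hF_sum
  simp only [hG_coeff] at hG_sum
  rw [hF_sum.tsum_eq, hG_sum.tsum_eq, mul_left_comm, ← integral_const_mul ω]
  refine mul_le_mul_of_nonneg_left ?_ (inv_nonneg.2 (by linarith [pi_pos]))
  exact integral_mono_ae hG.norm.integrable_sq (hF.norm.integrable_sq.const_mul ω) hpointwise

theorem stmt_19_general (ω : ℝ) (hω0 : 0 < ω) (hω2 : ω < 2) (α : ℝ) (hα : 0 < α)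
    (f : ℤ → ℂ) (hf : IsPaleyWienerZ ω f) :
    ((1 - (1 + α) / α * (ω / 2)) / (1 + α) * ∑' n : ℤ, ‖f n‖ ^ 2 ≤
        ∑' j : ℤ, 1 / 2 * ‖f (2 * j) + f (2 * j + 1)‖ ^ 2) ∧
      ∑' j : ℤ, 1 / 2 * ‖f (2 * j) + f (2 * j + 1)‖ ^ 2 ≤ ∑' n : ℤ, ‖f n‖ ^ 2 := by
  have hsplit := tsum_half_sq_norm_add_add_tsum_half_sq_norm_sub hf.1
  have hsub_nonneg : 0 ≤ ∑' j : ℤ, 1 / 2 * ‖f (2 * j) - f (2 * j + 1)‖ ^ 2 :=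
    tsum_nonneg fun _ ↦ by positivity
  have hsub_le : ∑' j : ℤ, 1 / 2 * ‖f (2 * j) - f (2 * j + 1)‖ ^ 2 ≤
      1 / 2 * (ω * ∑' n : ℤ, ‖f n‖ ^ 2) :=
    (tsum_half_sq_norm_sub_le hf.1.sq_norm_sub_add_one).trans
      (mul_le_mul_of_nonneg_left hf.tsum_sq_norm_sub_add_one_le (by norm_num))
  -- `(1 + α) (1 - ω / 2) - (1 - γ) = (α ^ 2 (2 - ω) + ω) / (2 α)`
  have hconst : (1 - (1 + α) / α * (ω / 2)) / (1 + α) ≤ 1 - ω / 2 := by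
    rw [div_le_iff₀ (by positivity)]
    field_simp
    nlinarith [mul_pos (mul_pos hα hα) (sub_pos.2 hω2)]
  have hnorm_nonneg : 0 ≤ ∑' n : ℤ, ‖f n‖ ^ 2 := tsum_nonneg fun _ ↦ by positivity
  refine ⟨?_, by linarith⟩
  calc _ ≤ (1 - ω / 2) * ∑' n : ℤ, ‖f n‖ ^ 2 := mul_le_mul_of_nonneg_right hconst hnorm_nonneg
    _ ≤ _ := by linarith

/-- Let `0 < ω < 2` and let `α > 0` be such that
`γ = ((1+α)/α)·(ω/2) < 1`.  Then for every `f ∈ PW_ω(ℤ)`,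
`((1−γ)/(1+α))·∑_{n∈ℤ} |f(n)|² ≤ ∑_{j even} (1/2)·|f(j) + f(j+1)|² ≤ ∑_{n∈ℤ} |f(n)|²`,
where the middle sum runs over all even integers `j = 2j'`. -/
theorem stmt_19 (ω : ℝ) (hω0 : 0 < ω) (hω2 : ω < 2) (α : ℝ) (hα : 0 < α)
    (hγ : (1 + α) / α * (ω / 2) < 1) (f : ℤ → ℂ) (hf : IsPaleyWienerZ ω f) :
    ((1 - (1 + α) / α * (ω / 2)) / (1 + α) * ∑' n : ℤ, ‖f n‖ ^ 2 ≤
        ∑' j : ℤ, 1 / 2 * ‖f (2 * j) + f (2 * j + 1)‖ ^ 2) ∧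
      ∑' j : ℤ, 1 / 2 * ‖f (2 * j) + f (2 * j + 1)‖ ^ 2 ≤ ∑' n : ℤ, ‖f n‖ ^ 2 :=
  stmt_19_general ω hω0 hω2 α hα f hf
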